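/- For positive integers n and c, as formal power series, ∑_{w ∈ S_n^c} t^{des(w)} / (1 − t)^{n+1} = ∑_{k ≥ 0} (ck + 1)^n t^k; that is, the descent polynomial of the coloured permutation group ℤ/cℤ ≀ S_n is the h*-polynomial of the cube [0, c]^n. -/

import Mathlib

/-- The 1-indexed letter sequence of a permutation word, with `w_0 := 0`. -/
def permLetter {n : ℕ} (σ : Equiv.Perm (Fin n)) : ℕ → ℕ := fun i =>
  if h : i - 1 < n ∧ 1 ≤ i then ((σ ⟨i - 1, h.1⟩ : Fin n) : ℕ) + 1 else 0

/-- The 1-indexed colour sequence, with `γ_0 := 0`. -/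
def wordColour {n c : ℕ} (γ : Fin n → Fin c) : ℕ → ℕ := fun i =>
  if h : i - 1 < n ∧ 1 ≤ i then ((γ ⟨i - 1, h.1⟩ : Fin c) : ℕ) else 0

/-- The descent set of a coloured permutation with letter sequence `v` and colour
sequence `g` (with `v 0 = g 0 = 0`, i.e. `w_0^{γ_0} = 0^0`): position
`i ∈ {0,…,n-1}` is a descent iff `γ_i = γ_{i+1} = 0 ∧ w_i > w_{i+1}`, or
`γ_i = γ_{i+1} > 0 ∧ w_i ≥ w_{i+1}`, or `γ_i < γ_{i+1}`. -/
def colouredDesSet (n : ℕ) (v g : ℕ → ℕ) : Finset ℕ :=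
  (Finset.range n).filter (fun i =>
    (g i = 0 ∧ g (i + 1) = 0 ∧ v (i + 1) < v i) ∨
    (g i = g (i + 1) ∧ 0 < g i ∧ v (i + 1) ≤ v i) ∨
    g i < g (i + 1))


/-!
The coefficient of `t^k` on the left is `∑_w C(n + k - des w, n)`, and `C(n + k - des w, n)`
counts the sequences `0 ≤ μ₁ ≤ ⋯ ≤ μₙ ≤ k` that increase strictly at the descents of `w`:
adding to `μᵢ` the number of non-descents at or before position `i` turns them into the
`n`-subsets of `[1, n + k - des w]`. On the right, `(ck + 1)^n` counts the points of
`[0, ck]^n`. Write each coordinate as `x = c m - g` with level `m = ⌈x / c⌉` and colour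
`0 ≤ g < c`, and sort the coordinates stably. This yields a coloured permutation `w`, and the
levels of the sorted coordinates form such a sequence for `w`: a step of the sorted word must
increase the level exactly when it is a coloured descent. Conversely `w` and the levels recover
the point.
-/

namespace ColouredPerm

open Finset

variable {n : ℕ}

/-- `permLetter σ` and `wordColour γ` are definitionally of this form. -/
def consZero (x : Fin n → ℕ) : ℕ → ℕ := fun i =>
  if h : i - 1 < n ∧ 1 ≤ i then x ⟨i - 1, h.1⟩ else 0

@[simp] lemma consZero_zero (x : Fin n → ℕ) : consZero x 0 = 0 := by simp [consZero]

@[simp] lemma consZero_succ (x : Fin n → ℕ) {i : ℕ} (hi : i < n) :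
    consZero x (i + 1) = x ⟨i, hi⟩ := by
  simp [consZero, hi]

lemma consZero_comp {g : ℕ → ℕ} (hg : g 0 = 0) (x : Fin n → ℕ) :
    consZero (g ∘ x) = g ∘ consZero x := by
  funext i
  simp only [consZero, Function.comp_apply]
  split_ifs <;> simp [hg]

lemma le_apply_of_forall_lt_succ {T : ℕ → ℕ} (hT : ∀ j < n, T j < T (j + 1)) :
    ∀ j ≤ n, j ≤ T j := by
  intro j
  induction j with
  | zero => simp
  | succ j ih =>
    intro hj
    have := ih (by omega)
    have := hT j (by omega)
    omega

lemma consZero_le {x : Fin n → ℕ} {k : ℕ} (h : ∀ i, x i ≤ k) (j : ℕ) : consZero x j ≤ k := by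
  unfold consZero
  split_ifs
  exacts [h _, Nat.zero_le k]

lemma consZero_lt_succ {x : Fin n → ℕ} (hx : StrictMono x) (hpos : ∀ i, 0 < x i) :
    ∀ j < n, consZero x j < consZero x (j + 1) := by
  rintro (_ | j) hj
  · simpa [consZero_succ _ hj] using hpos _
  · rw [consZero_succ _ hj, consZero_succ _ (by omega)]
    exact hx (Fin.mk_lt_mk.mpr (lt_add_one j))

lemma succ_le_of_strictMono {x : Fin n → ℕ} (hx : StrictMono x) (hpos : ∀ i, 0 < x i)
    (i : Fin n) : (i : ℕ) + 1 ≤ x i := by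
  simpa using le_apply_of_forall_lt_succ (consZero_lt_succ hx hpos) (i + 1) i.isLt

lemma permLetter_eq (σ : Equiv.Perm (Fin n)) : permLetter σ = consZero fun i => (σ i : ℕ) + 1 :=
  rfl

lemma wordColour_eq {c : ℕ} (γ : Fin n → Fin c) : wordColour γ = consZero fun i => (γ i : ℕ) :=
  rfl

lemma permLetter_succ_ne (σ : Equiv.Perm (Fin n)) {j : ℕ} (hj : j < n) :
    permLetter σ (j + 1) ≠ permLetter σ j := by
  rw [permLetter_eq]
  rcases j with _ | j
  · simp [consZero_succ _ hj]
  · rw [consZero_succ _ hj, consZero_succ _ (by omega)]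
    have : σ ⟨j + 1, hj⟩ ≠ σ ⟨j, by omega⟩ := σ.injective.ne (by simp)
    exact fun h => this (Fin.ext (by omega))

lemma mem_colouredDesSet_iff {v g : ℕ → ℕ} {j : ℕ} (hv : v (j + 1) ≠ v j) :
    j ∈ colouredDesSet n v g ↔
      j < n ∧ (g j < g (j + 1) ∨ g j = g (j + 1) ∧ v (j + 1) < v j) := by
  simp only [colouredDesSet, mem_filter, mem_range]
  omega

lemma colouredDesSet_subset {v g : ℕ → ℕ} : colouredDesSet n v g ⊆ range n :=
  filter_subset _ _

lemma card_colouredDesSet_le {v g : ℕ → ℕ} : #(colouredDesSet n v g) ≤ n :=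
  (card_le_card colouredDesSet_subset).trans (card_range n).le

def Compatible (D : Finset ℕ) (n : ℕ) (M : ℕ → ℕ) : Prop :=
  ∀ j < n, if j ∈ D then M j < M (j + 1) else M j ≤ M (j + 1)

lemma Compatible.monotoneOn {D : Finset ℕ} {M : ℕ → ℕ} (h : Compatible D n M) :
    MonotoneOn M (Set.Iic n) :=
  monotoneOn_of_le_succ Set.ordConnected_Iic fun j _ _ hj => by
    have := h j (Order.succ_le_iff.mp hj)
    rw [Order.succ_eq_add_one]
    split_ifs at this <;> omega

/-- Colours weakly decrease along non-descents and start at `0`, so they stay `0` as long as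
`M` does. -/
lemma Compatible.eq_zero_of_eq_zero {v g M : ℕ → ℕ} (h : Compatible (colouredDesSet n v g) n M)
    (hg : g 0 = 0) : ∀ j ≤ n, M j = 0 → g j = 0 := by
  intro j
  induction j with
  | zero => exact fun _ _ => hg
  | succ j ih =>
    intro hj hM
    have step := h j (by omega)
    split_ifs at step with hdes
    · omega
    · have : ¬ g j < g (j + 1) := fun hlt =>
        hdes (mem_filter.mpr ⟨mem_range.mpr (by omega), Or.inr (Or.inr hlt)⟩)
      have := ih (by omega) (by omega)
      omega

section Count

variable {D : Finset ℕ} {k : ℕ}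

lemma compatible_iff_lt_succ {M : ℕ → ℕ} : Compatible D n M ↔
    ∀ j < n, M j + Nat.count (· ∉ D) j < M (j + 1) + Nat.count (· ∉ D) (j + 1) := by
  simp only [Compatible, Nat.count_succ]
  refine forall₂_congr fun j _ => ?_
  split_ifs <;> omega

lemma count_notMem_eq_sub_card (hD : D ⊆ range n) : Nat.count (· ∉ D) n = n - #D := by
  rw [Nat.count_eq_card_filter_range, filter_not, card_sdiff_of_subset (filter_subset _ _),
    card_range, filter_mem_eq_inter, inter_eq_right.mpr hD]

def compatibleSeqs (D : Finset ℕ) (n k : ℕ) : Set (Fin n → ℕ) :=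
  {μ | (∀ i, μ i ≤ k) ∧ Compatible D n (consZero μ)}

lemma strictMono_add_count {μ : Fin n → ℕ} (hμ : Compatible D n (consZero μ)) :
    StrictMono fun i : Fin n => μ i + Nat.count (· ∉ D) (i + 1) := fun a b hab => by
  have := strictMonoOn_Iic_of_lt_succ (compatible_iff_lt_succ.mp hμ)
    (Set.mem_Iic.mpr a.isLt) (Set.mem_Iic.mpr b.isLt) (by simpa using hab)
  simpa only [consZero_succ _ a.isLt, consZero_succ _ b.isLt, Fin.eta] using this

lemma add_count_mem_Icc (hD : D ⊆ range n) {μ : Fin n → ℕ} (hμ : μ ∈ compatibleSeqs D n k)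
    (i : Fin n) : μ i + Nat.count (· ∉ D) (i + 1) ∈ Set.Icc 1 (n + k - #D) := by
  have hstep := compatible_iff_lt_succ.mp hμ.2 i i.isLt
  have hle := (strictMonoOn_Iic_of_lt_succ (compatible_iff_lt_succ.mp hμ.2)).monotoneOn
    (Set.mem_Iic.mpr (show (i : ℕ) + 1 ≤ n from i.isLt)) (Set.mem_Iic.mpr le_rfl) i.isLt
  have := consZero_le hμ.1 n
  have := card_le_card hD
  simp only [consZero_succ _ i.isLt, Fin.eta, count_notMem_eq_sub_card hD, card_range] at hstep hle this
  exact ⟨by omega, by omega⟩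

lemma sub_count_mem_compatibleSeqs (hD : D ⊆ range n) (θ : Fin n ↪o Set.Icc 1 (n + k - #D)) :
    (fun i => (θ i : ℕ) - Nat.count (· ∉ D) (i + 1)) ∈ compatibleSeqs D n k := by
  have hθ : StrictMono fun i => (θ i : ℕ) := (Subtype.strictMono_coe _).comp θ.strictMono
  have hpos (i : Fin n) : 0 < (θ i : ℕ) := (θ i).2.1
  have hshift : ∀ j ≤ n, consZero (fun i => (θ i : ℕ) - Nat.count (· ∉ D) (i + 1)) j +
      Nat.count (· ∉ D) j = consZero (fun i => (θ i : ℕ)) j := by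
    rintro (_ | j) hj
    · simp
    · have := (Nat.count_le (p := (· ∉ D))).trans (succ_le_of_strictMono hθ hpos ⟨j, hj⟩)
      simp only [consZero_succ _ hj] at this ⊢
      omega
  have hμ : Compatible D n (consZero fun i => (θ i : ℕ) - Nat.count (· ∉ D) (i + 1)) :=
    compatible_iff_lt_succ.mpr fun j hj => by
      rw [hshift j hj.le, hshift (j + 1) hj]
      exact consZero_lt_succ hθ hpos j hj
  refine ⟨fun i => show (θ i : ℕ) - Nat.count (· ∉ D) (i + 1) ≤ k from ?_, hμ⟩
  have hle := hμ.monotoneOn (Set.mem_Iic.mpr (show (i : ℕ) + 1 ≤ n from i.isLt))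
    (Set.mem_Iic.mpr le_rfl) i.isLt
  have hlast := hshift n le_rfl
  have := consZero_le (fun i => (θ i).2.2) n
  have := card_le_card hD
  simp only [consZero_succ _ i.isLt, Fin.eta, count_notMem_eq_sub_card hD, card_range] at hle hlast this
  omega

noncomputable def compatibleSeqsEquiv (hD : D ⊆ range n) :
    compatibleSeqs D n k ≃ (Fin n ↪o Set.Icc 1 (n + k - #D)) where
  toFun μ := OrderEmbedding.ofStrictMono (fun i => ⟨_, add_count_mem_Icc hD μ.2 i⟩)
    fun _ _ hab => Subtype.mk_lt_mk.mpr (strictMono_add_count μ.2.2 hab)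
  invFun θ := ⟨_, sub_count_mem_compatibleSeqs hD θ⟩
  left_inv μ := by ext i; exact Nat.add_sub_cancel ..
  right_inv θ := by
    ext i
    have := (Nat.count_le (p := (· ∉ D))).trans
      (succ_le_of_strictMono ((Subtype.strictMono_coe _).comp θ.strictMono) (fun i => (θ i).2.1) i)
    exact Nat.sub_add_cancel this

theorem card_compatibleSeqs (hD : D ⊆ range n) :
    Nat.card (compatibleSeqs D n k) = (n + k - #D).choose n := by
  rw [Nat.card_congr ((compatibleSeqsEquiv hD).trans Set.powersetCard.ofFinEmbEquiv),
    Set.powersetCard.card]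
  simp

end Count

section Encoding

variable {c : ℕ}

/-- `x = c * (x ⌈/⌉ c) - colour c x` with `colour c x < c`: the point `x` is the level `x ⌈/⌉ c`
with a colour, larger colours coming first within a level as in `1^{c-1} < ⋯ < n^0`. -/
def colour (c x : ℕ) : ℕ := c * (x ⌈/⌉ c) - x

@[simp] lemma colour_zero : colour c 0 = 0 := by simp [colour]

lemma add_colour (hc : 0 < c) (x : ℕ) : x + colour c x = c * (x ⌈/⌉ c) :=
  Nat.add_sub_cancel' (le_smul_ceilDiv hc)

lemma colour_lt (hc : 0 < c) (x : ℕ) : colour c x < c := by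
  by_contra! h
  have hx := add_colour hc x
  have : x ⌈/⌉ c ≤ x ⌈/⌉ c - 1 :=
    (ceilDiv_le_iff_le_mul hc).mpr (by rw [Nat.mul_sub_one]; omega)
  rw [show x ⌈/⌉ c = 0 by omega, mul_zero] at hx
  omega

lemma ceilDiv_mul_sub (hc : 0 < c) {g m : ℕ} (hg : g < c) (hgm : g ≤ c * m) :
    (c * m - g) ⌈/⌉ c = m := by
  refine le_antisymm ((ceilDiv_le_iff_le_mul hc).mpr (Nat.sub_le _ _)) (by_contra fun hlt => ?_)
  have hle := Nat.mul_le_mul_left c (Nat.succ_le_of_lt (not_le.mp hlt))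
  have := add_colour hc (c * m - g)
  have := colour_lt hc (c * m - g)
  rw [Nat.mul_succ] at hle
  omega

lemma colour_mul_sub (hc : 0 < c) {g m : ℕ} (hg : g < c) (hgm : g ≤ c * m) :
    colour c (c * m - g) = g := by
  rw [colour, ceilDiv_mul_sub hc hg hgm]
  omega

lemma lt_iff_ceilDiv (hc : 0 < c) {x y : ℕ} : x < y ↔
    x ⌈/⌉ c < y ⌈/⌉ c ∨ x ⌈/⌉ c = y ⌈/⌉ c ∧ colour c y < colour c x := by
  have hx := add_colour hc x
  have hy := add_colour hc y
  have := colour_lt hc x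
  have := colour_lt hc y
  rcases lt_trichotomy (x ⌈/⌉ c) (y ⌈/⌉ c) with h | h | h
  · have := Nat.mul_le_mul_left c (Nat.succ_le_of_lt h)
    rw [Nat.mul_succ] at this
    omega
  · rw [h] at hx
    omega
  · have := Nat.mul_le_mul_left c (Nat.succ_le_of_lt h)
    rw [Nat.mul_succ] at this
    omega

lemma toLex_lt_toLex_iff (hc : 0 < c) {x y u v : ℕ} (huv : v ≠ u) :
    toLex (x, u) < toLex (y, v) ↔
      if colour c x < colour c y ∨ colour c x = colour c y ∧ v < u then x ⌈/⌉ c < y ⌈/⌉ c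
      else x ⌈/⌉ c ≤ y ⌈/⌉ c := by
  have hx := add_colour hc x
  have hy := add_colour hc y
  have heq : x = y ↔ x ⌈/⌉ c = y ⌈/⌉ c ∧ colour c x = colour c y :=
    ⟨fun h => h ▸ ⟨rfl, rfl⟩, fun ⟨h, _⟩ => by rw [h] at hx; omega⟩
  rw [Prod.Lex.toLex_lt_toLex]
  dsimp only
  rw [lt_iff_ceilDiv hc, heq]
  split_ifs <;> omega

end Encoding

section Fibre

variable {c k : ℕ}

lemma lex_steps_iff_compatible (hc : 0 < c) {X L : ℕ → ℕ} (hL : ∀ j < n, L (j + 1) ≠ L j) :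
    (∀ j < n, toLex (X j, L j) < toLex (X (j + 1), L (j + 1))) ↔
      Compatible (colouredDesSet n L (colour c ∘ X)) n ((· ⌈/⌉ c) ∘ X) := by
  refine forall₂_congr fun j hj => ?_
  rw [toLex_lt_toLex_iff hc (hL j hj)]
  simp only [mem_colouredDesSet_iff (hL j hj), hj, true_and, Function.comp_apply]

lemma eq_sort_iff_lex_steps {m : ℕ} {f : Fin n → Fin m} {σ : Equiv.Perm (Fin n)} :
    σ = Tuple.sort f ↔ ∀ j < n,
      toLex (consZero (fun i => (f (σ i) : ℕ)) j, permLetter σ j) <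
        toLex (consZero (fun i => (f (σ i) : ℕ)) (j + 1), permLetter σ (j + 1)) := by
  have hK (i : ℕ) (hi : i < n) :
      toLex (consZero (fun i => (f (σ i) : ℕ)) (i + 1), permLetter σ (i + 1)) =
        toLex (((f (σ ⟨i, hi⟩) : ℕ)), (σ ⟨i, hi⟩ : ℕ) + 1) := by
    simp [permLetter_eq, consZero_succ _ hi]
  have hlex {a b : Fin n} : toLex (f (σ a), σ a) < toLex (f (σ b), σ b) ↔
      toLex (((f (σ a) : ℕ)), (σ a : ℕ) + 1) < toLex (((f (σ b) : ℕ)), (σ b : ℕ) + 1) := by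
    simp only [Prod.Lex.toLex_lt_toLex, Fin.lt_def, Fin.ext_iff]
    omega
  rw [Tuple.eq_sort_iff']
  change StrictMono (fun i => toLex (f (σ i), σ i)) ↔ _
  constructor
  · rintro h (_ | j) hj
    · -- the padding `(0, 0)` lies below every `(x, σ i + 1)`
      rw [hK 0 hj]
      simp only [consZero_zero, permLetter_eq, Prod.Lex.toLex_lt_toLex, lt_add_iff_pos_left,
        Order.lt_add_one_iff, zero_le, and_true]
      omega
    · rw [hK j (by omega), hK (j + 1) hj, ← hlex]
      exact h (Fin.mk_lt_mk.mpr (lt_add_one j))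
  · intro h a b hab
    have := strictMonoOn_Iic_of_lt_succ h (Set.mem_Iic.mpr (show (a : ℕ) + 1 ≤ n from a.isLt))
      (Set.mem_Iic.mpr (show (b : ℕ) + 1 ≤ n from b.isLt)) (by simpa using hab)
    rwa [hK a a.isLt, hK b b.isLt, ← hlex] at this

lemma sort_eq_iff_compatible (hc : 0 < c) {m : ℕ} {f : Fin n → Fin m} {σ : Equiv.Perm (Fin n)}
    {γ : Fin n → Fin c} (hcol : ∀ i, colour c (f (σ i)) = γ i) :
    σ = Tuple.sort f ↔ Compatible (colouredDesSet n (permLetter σ) (wordColour γ)) n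
      (consZero fun i => (f (σ i) : ℕ) ⌈/⌉ c) := by
  rw [eq_sort_iff_lex_steps, lex_steps_iff_compatible hc fun j hj => permLetter_succ_ne σ hj,
    ← consZero_comp colour_zero, ← consZero_comp (g := (· ⌈/⌉ c)) (zero_ceilDiv c)]
  have : colour c ∘ (fun i => (f (σ i) : ℕ)) = fun i => (γ i : ℕ) := funext hcol
  rw [this]
  rfl

noncomputable def toColouredPerm (hc : 0 < c) {m : ℕ} (f : Fin n → Fin m) :
    Equiv.Perm (Fin n) × (Fin n → Fin c) :=
  (Tuple.sort f, fun i => ⟨colour c (f (Tuple.sort f i)), colour_lt hc _⟩)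

lemma toColouredPerm_eq_iff (hc : 0 < c) {m : ℕ} (f : Fin n → Fin m) (σ : Equiv.Perm (Fin n))
    (γ : Fin n → Fin c) : toColouredPerm hc f = (σ, γ) ↔ (∀ i, colour c (f (σ i)) = γ i) ∧
      Compatible (colouredDesSet n (permLetter σ) (wordColour γ)) n
        (consZero fun i => (f (σ i) : ℕ) ⌈/⌉ c) := by
  simp only [toColouredPerm, Prod.mk.injEq]
  constructor
  · rintro ⟨rfl, rfl⟩
    exact ⟨fun i => rfl, (sort_eq_iff_compatible hc fun i => rfl).mp rfl⟩
  · rintro ⟨hcol, hμ⟩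
    obtain rfl := (sort_eq_iff_compatible hc hcol).mpr hμ
    exact ⟨rfl, funext fun i => Fin.ext (hcol i)⟩

lemma colour_le_mul {σ : Equiv.Perm (Fin n)} {γ : Fin n → Fin c} {μ : Fin n → ℕ}
    (hμ : Compatible (colouredDesSet n (permLetter σ) (wordColour γ)) n (consZero μ)) (i : Fin n) :
    (γ i : ℕ) ≤ c * μ i := by
  rcases Nat.eq_zero_or_pos (μ i) with h | h
  · have := hμ.eq_zero_of_eq_zero (consZero_zero fun i => (γ i : ℕ)) (i + 1) i.isLt (by simp [h])
    simp only [wordColour_eq, consZero_succ _ i.isLt, Fin.eta] at this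
    omega
  · nlinarith [(γ i).isLt]

noncomputable def fibreEquiv (hc : 0 < c) (σ : Equiv.Perm (Fin n)) (γ : Fin n → Fin c) :
    {f : Fin n → Fin (c * k + 1) // toColouredPerm hc f = (σ, γ)} ≃
      compatibleSeqs (colouredDesSet n (permLetter σ) (wordColour γ)) n k where
  toFun f := ⟨fun i => (f.1 (σ i) : ℕ) ⌈/⌉ c,
    fun i => (ceilDiv_le_iff_le_mul hc).mpr (Nat.lt_succ_iff.mp (f.1 (σ i)).isLt),
    ((toColouredPerm_eq_iff hc f.1 σ γ).mp f.2).2⟩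
  invFun μ := ⟨fun j => ⟨c * μ.1 (σ.symm j) - γ (σ.symm j),
      Nat.lt_succ_of_le ((Nat.sub_le _ _).trans (Nat.mul_le_mul_left c (μ.2.1 _)))⟩,
    by
      have hlev (i : Fin n) := ceilDiv_mul_sub hc (γ i).isLt (colour_le_mul μ.2.2 i)
      have hcol (i : Fin n) := colour_mul_sub hc (γ i).isLt (colour_le_mul μ.2.2 i)
      refine (toColouredPerm_eq_iff hc _ σ γ).mpr ⟨fun i => ?_, ?_⟩
      · simpa only [Equiv.symm_apply_apply] using hcol i
      · simpa only [Equiv.symm_apply_apply, hlev] using μ.2.2⟩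
  left_inv f := by
    ext j
    have hcol := ((toColouredPerm_eq_iff hc f.1 σ γ).mp f.2).1 (σ.symm j)
    rw [Equiv.apply_symm_apply] at hcol
    have := add_colour hc (f.1 j)
    simp only [Equiv.apply_symm_apply]
    omega
  right_inv μ := by
    ext i
    simpa using ceilDiv_mul_sub hc (γ i).isLt (colour_le_mul μ.2.2 i)

end Fibre

theorem sum_choose_sub_card_colouredDesSet {c : ℕ} (hc : 0 < c) (k : ℕ) :
    ∑ p : Equiv.Perm (Fin n) × (Fin n → Fin c),
      (n + k - #(colouredDesSet n (permLetter p.1) (wordColour p.2))).choose n =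
        (c * k + 1) ^ n := by
  calc _ = ∑ p, #{f : Fin n → Fin (c * k + 1) | toColouredPerm hc f = p} := by
        refine sum_congr rfl fun p _ => ?_
        rw [← card_compatibleSeqs colouredDesSet_subset, ← Nat.card_congr (fibreEquiv hc p.1 p.2),
          Nat.card_eq_fintype_card, Fintype.card_subtype]
    _ = (c * k + 1) ^ n := by
        rw [← card_eq_sum_card_fiberwise fun _ _ => mem_coe.mpr (mem_univ _)]
        simp

open PowerSeries in
lemma coeff_X_pow_mul_inv_one_sub_pow {K : Type*} [Field K] {d : ℕ} (hd : d ≤ n) (k : ℕ) :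
    coeff k (X ^ d * ((1 - X) ^ (n + 1))⁻¹ : K⟦X⟧) = (n + k - d).choose n := by
  have hinv : ((1 - X : K⟦X⟧) ^ (n + 1))⁻¹ = mk fun j => ((n + j).choose n : K) :=
    (inv_eq_iff_mul_eq_one (by simp)).mpr (mk_add_choose_mul_one_sub_pow_eq_one K n)
  rw [hinv, coeff_X_pow_mul', coeff_mk]
  split_ifs with h
  · congr 2
    omega
  · rw [Nat.choose_eq_zero_of_lt (by omega), Nat.cast_zero]

end ColouredPerm

open ColouredPerm PowerSeries in
theorem coloured_perms_hstar_cube_general (n c : ℕ) (hc : 0 < c) :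
    (∑ p : Equiv.Perm (Fin n) × (Fin n → Fin c),
        (PowerSeries.X : PowerSeries ℚ) ^
          (colouredDesSet n (permLetter p.1) (wordColour p.2)).card)
      * ((1 - PowerSeries.X) ^ (n + 1))⁻¹
      = PowerSeries.mk (fun k => (((c * k + 1 : ℕ) ^ n : ℕ) : ℚ)) := by
  ext k
  simp only [Finset.sum_mul, map_sum, coeff_mk,
    coeff_X_pow_mul_inv_one_sub_pow card_colouredDesSet_le]
  exact_mod_cast sum_choose_sub_card_colouredDesSet hc k

/-- For the coloured permutation group `S_n^c = ℤ/cℤ ≀ S_n`, as formal power series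
over `ℚ`: `∑_{w ∈ S_n^c} t^{des w} / (1-t)^{n+1} = ∑_{k≥0} (ck+1)^n t^k`, i.e. the
descent polynomial of `S_n^c` is the `h^*`-polynomial of the cube `[0,c]^n`. -/
theorem coloured_perms_hstar_cube (n c : ℕ) (hn : 0 < n) (hc : 0 < c) :
    (∑ p : Equiv.Perm (Fin n) × (Fin n → Fin c),
        (PowerSeries.X : PowerSeries ℚ) ^
          (colouredDesSet n (permLetter p.1) (wordColour p.2)).card)
      * ((1 - PowerSeries.X) ^ (n + 1))⁻¹
      = PowerSeries.mk (fun k => (((c * k + 1 : ℕ) ^ n : ℕ) : ℚ)) :=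
  coloured_perms_hstar_cube_general n c hc
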